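/- If G is a d-regular simple graph on n vertices with n^(2/3) < d ≤ n^(3/4), then the second largest eigenvalue λ₂ of the adjacency matrix of G satisfies λ₂ ≥ n/(2d) - 1. -/

import Mathlib

/-!
Since `G` is `d`-regular, the all-ones vector `1` is an eigenvector for the top eigenvalue `d`,
so `λ₂` bounds the Rayleigh quotient `x ⬝ᵥ A x / x ⬝ᵥ x` of every nonzero `x ⊥ 1`; it remains to
exhibit such an `x` with quotient at least `n / (2d) - 1`.

If `2d < n`, let `w = n eᵤ - 1` and `x = 3d² w + 2n A w`. Both `x ⬝ᵥ x` and `x ⬝ᵥ A x` are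
combinations of the moments `w ⬝ᵥ Aᵏ w = n² (Aᵏ)ᵤᵤ - n dᵏ`, where `(Aᵏ)ᵤᵤ` is `1, 0, d` and a
nonnegative walk count for `k = 0, 1, 2, 3`; the bounds `n² < d³` and `d⁴ ≤ n³` then give the claim
by polynomial arithmetic. If `n ≤ 2d` the target is `≤ 0`, and `eᵤ - eᵥ` for a non-neighbour `v`
of `u` has quotient `0`.
-/

open Matrix

theorem Real.rpow_div_natCast_pow {x : ℝ} (hx : 0 ≤ x) (p : ℕ) {q : ℕ} (hq : q ≠ 0) :
    (x ^ ((p : ℝ) / q)) ^ q = x ^ p := by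
  rw [← Real.rpow_natCast, ← Real.rpow_mul hx, div_mul_cancel₀ _ (Nat.cast_ne_zero.mpr hq),
    Real.rpow_natCast]

theorem Nat.pow_lt_pow_of_rpow_div_lt {n d p q : ℕ} (hq : q ≠ 0)
    (h : (n : ℝ) ^ ((p : ℝ) / q) < d) : n ^ p < d ^ q := by
  have := pow_lt_pow_left₀ h (by positivity) hq
  rw [Real.rpow_div_natCast_pow n.cast_nonneg p hq] at this
  exact_mod_cast this

theorem Nat.pow_le_pow_of_le_rpow_div {n d p q : ℕ} (hq : q ≠ 0)
    (h : (d : ℝ) ≤ (n : ℝ) ^ ((p : ℝ) / q)) : d ^ q ≤ n ^ p := by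
  have := pow_le_pow_left₀ d.cast_nonneg h q
  rw [Real.rpow_div_natCast_pow n.cast_nonneg p hq] at this
  exact_mod_cast this

theorem Nat.add_two_le_of_sq_lt_cube {n d : ℕ} (h₁ : n ^ 2 < d ^ 3) (h₂ : d ^ 4 ≤ n ^ 3) :
    d + 2 ≤ n := by
  by_contra! h
  have hd : d ≤ 2 := by
    by_contra! hd
    have : d ^ 4 ≤ (d + 1) ^ 3 := h₂.trans (Nat.pow_le_pow_left (by omega) 3)
    nlinarith [Nat.mul_le_mul_right (d ^ 3) hd]
  interval_cases d <;> interval_cases n <;> omega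

theorem Nat.five_le_of_sq_lt_cube_of_two_mul_lt {n d : ℕ} (h₁ : n ^ 2 < d ^ 3) (h : 2 * d < n) : 5 ≤ d := by
  have : (2 * d + 1) ^ 2 < d ^ 3 := (Nat.pow_le_pow_left h 2).trans_lt h₁
  by_contra! hd
  interval_cases d <;> omega

theorem rayleigh_denominator_pos {n d : ℝ} (hd : 0 < d) (hnd : 2 * d + 1 ≤ n) (hn : n < d ^ 2) :
    0 < (3 * d ^ 2) ^ 2 * (n ^ 2 - n) + 2 * (3 * d ^ 2) * (2 * n) * -(n * d) +
      (2 * n) ^ 2 * (n ^ 2 * d - n * d ^ 2) := by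
  have hn₀ : 0 < n := by linarith
  have hq : 0 ≤ n - 2 * d - 1 := by linarith
  nlinarith [mul_nonneg hq (by positivity : (0 : ℝ) ≤ 9 * n * d ^ 4),
    mul_nonneg hq (by positivity : (0 : ℝ) ≤ 4 * n ^ 3 * d),
    mul_nonneg hq (by positivity : (0 : ℝ) ≤ 4 * n ^ 2 * d ^ 2),
    mul_pos (by positivity : (0 : ℝ) < 2 * n * d ^ 3) (by nlinarith : 0 < 9 * d ^ 2 - 2 * n),
    (by positivity : (0 : ℝ) < 4 * n ^ 3 * d), (by positivity : (0 : ℝ) < 4 * n ^ 2 * d ^ 2)]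

theorem rayleigh_numerator_ge {n d T : ℝ} (hT : 0 ≤ T) (h₁ : n ^ 2 + 1 ≤ d ^ 3)
    (h₂ : d ^ 4 ≤ n ^ 3) (hnd : 2 * d + 1 ≤ n) (hd : 5 ≤ d) :
    (n / (2 * d) - 1) * ((3 * d ^ 2) ^ 2 * (n ^ 2 - n) + 2 * (3 * d ^ 2) * (2 * n) * -(n * d) +
      (2 * n) ^ 2 * (n ^ 2 * d - n * d ^ 2)) ≤
    (3 * d ^ 2) ^ 2 * -(n * d) + 2 * (3 * d ^ 2) * (2 * n) * (n ^ 2 * d - n * d ^ 2) +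
      (2 * n) ^ 2 * (n ^ 2 * T - n * d ^ 3) := by
  have hd₀ : 0 < d := by linarith
  have hn₀ : 0 < n := by linarith
  have hg₁ : 0 ≤ d ^ 3 - n ^ 2 - 1 := by linarith
  have hg₂ : 0 ≤ n ^ 3 - d ^ 4 := by linarith
  have hg₃ : 0 ≤ n - 2 * d - 1 := by linarith
  have hg₄ : 0 ≤ d - 5 := by linarith
  rw [show n / (2 * d) - 1 = (n - 2 * d) / (2 * d) by field_simp, div_mul_eq_mul_div,
    div_le_iff₀ (by positivity)]
  nlinarith [mul_nonneg hg₄ (by positivity : (0 : ℝ) ≤ n ^ 2 * d ^ 2),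
    mul_nonneg (mul_nonneg hg₃ hg₄) (by positivity : (0 : ℝ) ≤ n * d ^ 4),
    mul_nonneg hg₂ (by positivity : (0 : ℝ) ≤ n * d),
    mul_nonneg (mul_nonneg hg₃ hg₄) (by positivity : (0 : ℝ) ≤ n ^ 2 * d ^ 2),
    mul_nonneg hg₁ (by positivity : (0 : ℝ) ≤ n * d),
    mul_nonneg hg₃ (by positivity : (0 : ℝ) ≤ n ^ 3 * d ^ 2),
    mul_nonneg (mul_nonneg hg₁ hg₃) (by positivity : (0 : ℝ) ≤ n * d ^ 2),
    mul_nonneg hg₃ (by positivity : (0 : ℝ) ≤ n * d ^ 3),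
    mul_nonneg (mul_nonneg hg₁ hg₃) (by positivity : (0 : ℝ) ≤ n * d),
    mul_nonneg hg₄ (by positivity : (0 : ℝ) ≤ n * d ^ 2),
    mul_nonneg hg₂ (by positivity : (0 : ℝ) ≤ n * d ^ 2),
    mul_nonneg hg₃ (by positivity : (0 : ℝ) ≤ n * d),
    mul_nonneg hg₄ (by positivity : (0 : ℝ) ≤ n ^ 3 * d ^ 2),
    mul_nonneg hg₃ (by positivity : (0 : ℝ) ≤ n ^ 2 * d ^ 3),
    mul_nonneg hg₃ (by positivity : (0 : ℝ) ≤ n ^ 2 * d ^ 4),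
    mul_nonneg (mul_nonneg hg₁ hg₃) (by positivity : (0 : ℝ) ≤ n ^ 2 * d),
    mul_nonneg hg₄ (by positivity : (0 : ℝ) ≤ n * d ^ 3),
    mul_nonneg hT (by positivity : (0 : ℝ) ≤ 8 * n ^ 4 * d)]

theorem Matrix.pow_mulVec_of_mulVec_eq_smul {ι : Type*} [Fintype ι] [DecidableEq ι]
    {M : Matrix ι ι ℝ} {v : ι → ℝ} {c : ℝ} (h : M *ᵥ v = c • v) (k : ℕ) :
    M ^ k *ᵥ v = c ^ k • v := by
  induction k with
  | zero => simp
  | succ k ih => rw [pow_succ, ← mulVec_mulVec, h, mulVec_smul, ih, smul_smul, pow_succ, mul_comm]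

namespace Matrix.IsSymm

variable {ι : Type*} [Fintype ι] [DecidableEq ι] {M : Matrix ι ι ℝ}

omit [DecidableEq ι] in
theorem mulVec_dotProduct (hM : M.IsSymm) (x y : ι → ℝ) : (M *ᵥ x) ⬝ᵥ y = x ⬝ᵥ (M *ᵥ y) := by
  rw [dotProduct_mulVec, ← vecMul_transpose, hM.eq]

theorem dotProduct_pow_mulVec_add_smul_mulVec (hM : M.IsSymm) (w : ι → ℝ) (a b : ℝ) (k : ℕ) :
    (a • w + b • (M *ᵥ w)) ⬝ᵥ (M ^ k *ᵥ (a • w + b • (M *ᵥ w))) =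
      a ^ 2 * (w ⬝ᵥ (M ^ k *ᵥ w)) + 2 * a * b * (w ⬝ᵥ (M ^ (k + 1) *ᵥ w)) +
        b ^ 2 * (w ⬝ᵥ (M ^ (k + 2) *ᵥ w)) := by
  have h₁ : w ⬝ᵥ (M ^ k *ᵥ (M *ᵥ w)) = w ⬝ᵥ (M ^ (k + 1) *ᵥ w) := by
    rw [mulVec_mulVec, pow_succ]
  have h₂ : (M *ᵥ w) ⬝ᵥ (M ^ k *ᵥ w) = w ⬝ᵥ (M ^ (k + 1) *ᵥ w) := by
    rw [hM.mulVec_dotProduct, mulVec_mulVec, pow_succ']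
  have h₃ : (M *ᵥ w) ⬝ᵥ (M ^ k *ᵥ (M *ᵥ w)) = w ⬝ᵥ (M ^ (k + 2) *ᵥ w) := by
    rw [hM.mulVec_dotProduct, mulVec_mulVec, mulVec_mulVec, pow_succ, pow_succ', mul_assoc]
  simp only [mulVec_add, mulVec_smul, add_dotProduct, dotProduct_add, smul_dotProduct,
    dotProduct_smul, smul_eq_mul, h₁, h₂, h₃]
  ring

theorem dotProduct_mulVec_smul_single_sub_one (hM : M.IsSymm) {c : ℝ}
    (hc : M *ᵥ 1 = c • 1) (u : ι) (a : ℝ) :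
    (a • Pi.single u 1 - 1) ⬝ᵥ (M *ᵥ (a • Pi.single u 1 - 1)) =
      a ^ 2 * M u u - 2 * a * c + c * Fintype.card ι := by
  have h₁ : Pi.single u 1 ⬝ᵥ (M *ᵥ 1) = c := by simp [hc]
  have h₂ : (1 : ι → ℝ) ⬝ᵥ (M *ᵥ Pi.single u 1) = c := by
    rw [dotProduct_comm, hM.mulVec_dotProduct, h₁]
  have h₃ : (1 : ι → ℝ) ⬝ᵥ (M *ᵥ 1) = c * Fintype.card ι := by
    simp [hc, dotProduct_one]
  have h₄ : Pi.single u 1 ⬝ᵥ (M *ᵥ Pi.single u 1) = M u u := by simp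
  simp only [mulVec_sub, mulVec_smul, sub_dotProduct, dotProduct_sub, smul_dotProduct,
    dotProduct_smul, smul_eq_mul]
  rw [h₁, h₂, h₃, h₄]
  ring

end Matrix.IsSymm

namespace Matrix.IsHermitian

variable {ι : Type*} [Fintype ι] [DecidableEq ι] {A : Matrix ι ι ℝ} (hA : A.IsHermitian)

theorem dotProduct_eq_sum_eigenvectorBasis (x y : ι → ℝ) :
    x ⬝ᵥ y = ∑ i, (⇑(hA.eigenvectorBasis i) ⬝ᵥ x) * (⇑(hA.eigenvectorBasis i) ⬝ᵥ y) := by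
  have := hA.eigenvectorBasis.sum_inner_mul_inner (WithLp.toLp 2 x) (WithLp.toLp 2 y)
  simp only [EuclideanSpace.inner_eq_star_dotProduct, star_trivial] at this
  rw [dotProduct_comm, ← this]
  simp only [dotProduct_comm y]

theorem eigenvectorBasis_dotProduct_mulVec (i : ι) (y : ι → ℝ) :
    ⇑(hA.eigenvectorBasis i) ⬝ᵥ (A *ᵥ y) = hA.eigenvalues i * (⇑(hA.eigenvectorBasis i) ⬝ᵥ y) := by
  rw [dotProduct_mulVec, ← mulVec_transpose, ← conjTranspose_eq_transpose_of_trivial, hA.eq,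
    mulVec_eigenvectorBasis, smul_dotProduct, smul_eq_mul]

theorem dotProduct_mulVec_eq_sum_eigenvalues (x : ι → ℝ) :
    x ⬝ᵥ (A *ᵥ x) = ∑ i, hA.eigenvalues i * (⇑(hA.eigenvectorBasis i) ⬝ᵥ x) ^ 2 := by
  rw [hA.dotProduct_eq_sum_eigenvectorBasis]
  refine Finset.sum_congr rfl fun i _ => ?_
  rw [eigenvectorBasis_dotProduct_mulVec]
  ring

theorem eigenvectorBasis_dotProduct_self (i : ι) :
    ⇑(hA.eigenvectorBasis i) ⬝ᵥ ⇑(hA.eigenvectorBasis i) = 1 := by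
  have := inner_self_eq_one_of_norm_eq_one (𝕜 := ℝ) (hA.eigenvectorBasis.orthonormal.1 i)
  rwa [EuclideanSpace.inner_eq_star_dotProduct, star_trivial] at this

theorem eigenvalues_le_of_dotProduct_mulVec_le {c : ℝ}
    (h : ∀ x, x ⬝ᵥ (A *ᵥ x) ≤ c * (x ⬝ᵥ x)) (i : ι) : hA.eigenvalues i ≤ c := by
  have := h (hA.eigenvectorBasis i)
  rwa [hA.mulVec_eigenvectorBasis, dotProduct_smul, smul_eq_mul,
    hA.eigenvectorBasis_dotProduct_self, mul_one, mul_one] at this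

theorem dotProduct_self_eq_sum_eigenvectorBasis (x : ι → ℝ) :
    x ⬝ᵥ x = ∑ i, (⇑(hA.eigenvectorBasis i) ⬝ᵥ x) ^ 2 := by
  simp only [hA.dotProduct_eq_sum_eigenvectorBasis x x, sq]

end Matrix.IsHermitian

theorem Matrix.IsHermitian.dotProduct_mulVec_le_of_orthogonal_top_eigenvector {n : ℕ}
    {A : Matrix (Fin n) (Fin n) ℝ} (hA : A.IsHermitian) {μ : Fin n → ℝ} (hμ : Antitone μ)
    {σ : Equiv.Perm (Fin n)} (hσ : μ = hA.eigenvalues ∘ σ) (h1 : 1 < n) {c : ℝ}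
    (hc : ∀ i, hA.eigenvalues i ≤ c)
    {v : Fin n → ℝ} (hv : v ≠ 0) (hAv : A *ᵥ v = c • v) {x : Fin n → ℝ} (hx : v ⬝ᵥ x = 0) :
    x ⬝ᵥ (A *ᵥ x) ≤ μ ⟨1, h1⟩ * (x ⬝ᵥ x) := by
  set E := hA.eigenvalues
  set β := fun i => ⇑(hA.eigenvectorBasis i) ⬝ᵥ v
  set γ := fun i => ⇑(hA.eigenvectorBasis i) ⬝ᵥ x
  set i₀ := σ ⟨0, by omega⟩
  have hE_le : ∀ j ≠ i₀, E j ≤ μ ⟨1, h1⟩ := by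
    intro j hj
    have h0 : σ.symm j ≠ ⟨0, by omega⟩ := fun h => hj (σ.symm_apply_eq.mp h)
    have : μ (σ.symm j) = E j := by rw [hσ]; simp
    have h1j : (⟨1, h1⟩ : Fin n) ≤ σ.symm j :=
      Fin.le_iff_val_le_val.mpr (Nat.one_le_iff_ne_zero.mpr (Fin.val_ne_of_ne h0))
    exact this ▸ hμ h1j
  have hβ : ∀ j, E j ≠ c → β j = 0 := fun j hj => by
    have := hA.eigenvectorBasis_dotProduct_mulVec j v
    rw [hAv, dotProduct_smul, smul_eq_mul] at this
    by_contra hβj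
    exact hj (mul_right_cancel₀ hβj this).symm
  -- if the top eigenvalue is simple, `v` lies on the `i₀`-th eigenvector, so `x ⊥ v` kills `γ i₀`
  have hγ₀ : μ ⟨1, h1⟩ < E i₀ → γ i₀ = 0 := by
    intro hlt
    have hβ_single : ∀ j ≠ i₀, β j = 0 := fun j hj =>
      hβ j ((hE_le j hj).trans_lt (hlt.trans_le (hc i₀))).ne
    have hv_sum := hA.dotProduct_self_eq_sum_eigenvectorBasis v
    have hx_sum := hA.dotProduct_eq_sum_eigenvectorBasis v x
    rw [Finset.sum_eq_single i₀ (fun j _ hj => by simp [β, hβ_single j hj]) (by simp)]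
      at hv_sum hx_sum
    have hβ₀ : β i₀ ≠ 0 := fun h => hv (dotProduct_self_eq_zero.mp (by simpa [β, h] using hv_sum))
    rw [hx, eq_comm, mul_eq_zero] at hx_sum
    exact hx_sum.resolve_left hβ₀
  have key : ∀ i, E i * γ i ^ 2 ≤ μ ⟨1, h1⟩ * γ i ^ 2 := by
    intro i
    by_cases hi : i = i₀
    · subst hi
      rcases le_or_gt (E i₀) (μ ⟨1, h1⟩) with hle | hlt
      · exact mul_le_mul_of_nonneg_right hle (sq_nonneg _)
      · simp [hγ₀ hlt]
    · exact mul_le_mul_of_nonneg_right (hE_le i hi) (sq_nonneg _)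
  calc x ⬝ᵥ (A *ᵥ x) = ∑ i, E i * γ i ^ 2 := hA.dotProduct_mulVec_eq_sum_eigenvalues x
    _ ≤ ∑ i, μ ⟨1, h1⟩ * γ i ^ 2 := Finset.sum_le_sum fun i _ => key i
    _ = μ ⟨1, h1⟩ * (x ⬝ᵥ x) := by rw [← Finset.mul_sum, hA.dotProduct_self_eq_sum_eigenvectorBasis]

namespace SimpleGraph

variable {V : Type*} [Fintype V] [DecidableEq V] {G : SimpleGraph V} [DecidableRel G.Adj] {d : ℕ}

omit [DecidableEq V] in
theorem IsRegularOfDegree.adjMatrix_mulVec_one (hreg : G.IsRegularOfDegree d) :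
    G.adjMatrix ℝ *ᵥ 1 = (d : ℝ) • 1 := by
  ext v
  simp [hreg v]

theorem IsRegularOfDegree.degMatrix_eq (hreg : G.IsRegularOfDegree d) :
    G.degMatrix ℝ = (d : ℝ) • 1 := by
  ext i j
  simp [degMatrix, diagonal, hreg i, Matrix.one_apply]

theorem IsRegularOfDegree.dotProduct_adjMatrix_mulVec_le (hreg : G.IsRegularOfDegree d)
    (x : V → ℝ) : x ⬝ᵥ (G.adjMatrix ℝ *ᵥ x) ≤ d * (x ⬝ᵥ x) := by
  have := (G.posSemidef_lapMatrix ℝ).dotProduct_mulVec_nonneg x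
  rw [star_trivial, lapMatrix, hreg.degMatrix_eq, sub_mulVec, dotProduct_sub, smul_mulVec,
    one_mulVec, dotProduct_smul, smul_eq_mul] at this
  linarith

theorem IsRegularOfDegree.dotProduct_adjMatrix_pow_mulVec (hreg : G.IsRegularOfDegree d)
    (u : V) (k : ℕ) :
    let w : V → ℝ := (Fintype.card V : ℝ) • Pi.single u 1 - 1
    w ⬝ᵥ (G.adjMatrix ℝ ^ k *ᵥ w) =
      (Fintype.card V : ℝ) ^ 2 * (G.adjMatrix ℝ ^ k) u u - Fintype.card V * (d : ℝ) ^ k := by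
  intro w
  rw [(G.isSymm_adjMatrix.pow k).dotProduct_mulVec_smul_single_sub_one
    (pow_mulVec_of_mulVec_eq_smul hreg.adjMatrix_mulVec_one k)]
  ring

theorem dotProduct_single_sub_single_of_not_adj {u v : V} (huv : u ≠ v) (hadj : ¬ G.Adj u v) :
    let x : V → ℝ := Pi.single u 1 - Pi.single v 1
    1 ⬝ᵥ x = 0 ∧ x ⬝ᵥ x = 2 ∧ x ⬝ᵥ (G.adjMatrix ℝ *ᵥ x) = 0 := by
  intro x
  refine ⟨by simp [x], ?_, ?_⟩
  · simp [x, huv, huv.symm]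
    norm_num
  · simp [x, hadj, mt G.adj_symm hadj]

theorem IsRegularOfDegree.exists_rayleigh_ge_of_two_mul_lt (hreg : G.IsRegularOfDegree d)
    (h₁ : Fintype.card V ^ 2 < d ^ 3) (h₂ : d ^ 4 ≤ Fintype.card V ^ 3)
    (h : 2 * d < Fintype.card V) (u : V) :
    ∃ x : V → ℝ, 1 ⬝ᵥ x = 0 ∧ 0 < x ⬝ᵥ x ∧
      ((Fintype.card V : ℝ) / (2 * d) - 1) * (x ⬝ᵥ x) ≤ x ⬝ᵥ (G.adjMatrix ℝ *ᵥ x) := by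
  set n := Fintype.card V
  set A := G.adjMatrix ℝ
  set w : V → ℝ := (n : ℝ) • Pi.single u 1 - 1
  have hm : ∀ k, w ⬝ᵥ (A ^ k *ᵥ w) = n ^ 2 * (A ^ k) u u - n * d ^ k :=
    hreg.dotProduct_adjMatrix_pow_mulVec u
  have hm₀ : w ⬝ᵥ w = n ^ 2 - n := by simpa using hm 0
  have hm₁ : w ⬝ᵥ (A *ᵥ w) = -(n * d) := by simpa [A] using hm 1
  have hm₂ : w ⬝ᵥ (A ^ 2 *ᵥ w) = n ^ 2 * d - n * d ^ 2 := by
    rw [hm, sq A, adjMatrix_mul_self_apply_self, hreg u]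
  have hT : 0 ≤ (A ^ 3) u u := by
    rw [adjMatrix_pow_apply_eq_card_walk]
    positivity
  have hm₃ : w ⬝ᵥ (A ^ 3 *ᵥ w) = n ^ 2 * (A ^ 3) u u - n * d ^ 3 := hm 3
  have hsymm := G.isSymm_adjMatrix (α := ℝ)
  set x := (3 * (d : ℝ) ^ 2) • w + (2 * (n : ℝ)) • (A *ᵥ w)
  have hxx := hsymm.dotProduct_pow_mulVec_add_smul_mulVec w (3 * (d : ℝ) ^ 2) (2 * n) 0
  have hxAx := hsymm.dotProduct_pow_mulVec_add_smul_mulVec w (3 * (d : ℝ) ^ 2) (2 * n) 1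
  simp only [pow_zero, pow_one, one_mulVec, Nat.reduceAdd] at hxx hxAx
  rw [hm₀, hm₁, hm₂] at hxx
  rw [hm₁, hm₂, hm₃] at hxAx
  have hd5 : (5 : ℝ) ≤ d := by exact_mod_cast Nat.five_le_of_sq_lt_cube_of_two_mul_lt h₁ h
  have hnd : 2 * (d : ℝ) + 1 ≤ n := by exact_mod_cast h
  have hR₁ : (n : ℝ) ^ 2 + 1 ≤ d ^ 3 := by exact_mod_cast h₁
  have hR₂ : (d : ℝ) ^ 4 ≤ n ^ 3 := by exact_mod_cast h₂
  refine ⟨x, ?_, ?_, ?_⟩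
  · have hw : (1 : V → ℝ) ⬝ᵥ w = 0 := by simp [w, n, dotProduct_one]
    rw [dotProduct_add, dotProduct_smul, dotProduct_smul, ← hsymm.mulVec_dotProduct,
      hreg.adjMatrix_mulVec_one, smul_dotProduct, hw]
    simp
  · rw [hxx]
    exact rayleigh_denominator_pos (by linarith) hnd (by nlinarith)
  · rw [hxx, hxAx]
    exact rayleigh_numerator_ge hT hR₁ hR₂ hnd hd5

theorem IsRegularOfDegree.exists_rayleigh_ge_of_le_two_mul (hreg : G.IsRegularOfDegree d)
    (hcard : d + 2 ≤ Fintype.card V) (h : Fintype.card V ≤ 2 * d) (u : V) :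
    ∃ x : V → ℝ, 1 ⬝ᵥ x = 0 ∧ 0 < x ⬝ᵥ x ∧
      ((Fintype.card V : ℝ) / (2 * d) - 1) * (x ⬝ᵥ x) ≤ x ⬝ᵥ (G.adjMatrix ℝ *ᵥ x) := by
  have hlt : (insert u (G.neighborFinset u)).card < (Finset.univ : Finset V).card := by
    have := Finset.card_insert_le u (G.neighborFinset u)
    rw [card_neighborFinset_eq_degree, hreg u] at this
    rw [Finset.card_univ]
    omega
  obtain ⟨v, -, hv⟩ := Finset.exists_mem_notMem_of_card_lt_card hlt
  rw [Finset.mem_insert, mem_neighborFinset, not_or] at hv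
  obtain ⟨h1, h2, h3⟩ := dotProduct_single_sub_single_of_not_adj (G := G) (Ne.symm hv.1) hv.2
  refine ⟨_, h1, by rw [h2]; norm_num, ?_⟩
  rw [h3, mul_nonpos_iff]
  refine Or.inr ⟨?_, by rw [h2]; norm_num⟩
  have hd : (0 : ℝ) < d := by exact_mod_cast (show 0 < d by omega)
  rw [sub_nonpos, div_le_one₀ (by positivity)]
  exact_mod_cast h

theorem IsRegularOfDegree.exists_rayleigh_ge (hreg : G.IsRegularOfDegree d)
    (h₁ : Fintype.card V ^ 2 < d ^ 3) (h₂ : d ^ 4 ≤ Fintype.card V ^ 3) :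
    ∃ x : V → ℝ, 1 ⬝ᵥ x = 0 ∧ 0 < x ⬝ᵥ x ∧
      ((Fintype.card V : ℝ) / (2 * d) - 1) * (x ⬝ᵥ x) ≤ x ⬝ᵥ (G.adjMatrix ℝ *ᵥ x) := by
  have hcard := Nat.add_two_le_of_sq_lt_cube h₁ h₂
  obtain ⟨u⟩ : Nonempty V := Fintype.card_pos_iff.mp (by omega)
  rcases le_or_gt (Fintype.card V) (2 * d) with h | h
  · exact hreg.exists_rayleigh_ge_of_le_two_mul hcard h u
  · exact hreg.exists_rayleigh_ge_of_two_mul_lt h₁ h₂ h u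

end SimpleGraph

/-- If `G` is a `d`-regular simple graph on `n ≥ 2` vertices with
`n^(2/3) < d ≤ n^(3/4)`, then the second largest eigenvalue `λ₂` of the adjacency
matrix of `G` satisfies `λ₂ ≥ n/(2d) - 1`. Here `μ` lists the eigenvalues of the
adjacency matrix in decreasing order, so `λ₂ = μ 1`. -/
theorem stmt_1 (n d : ℕ) (hn : 2 ≤ n)
    (G : SimpleGraph (Fin n)) [DecidableRel G.Adj]
    (hreg : G.IsRegularOfDegree d)
    (hA : (G.adjMatrix ℝ).IsHermitian)
    (μ : Fin n → ℝ) (hμ : Antitone μ)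
    (hperm : ∃ σ : Equiv.Perm (Fin n), μ = hA.eigenvalues ∘ σ)
    (hd1 : (n : ℝ) ^ ((2 : ℝ) / 3) < d) (hd2 : (d : ℝ) ≤ (n : ℝ) ^ ((3 : ℝ) / 4)) :
    μ ⟨1, by omega⟩ ≥ (n : ℝ) / (2 * d) - 1 := by
  obtain ⟨σ, hσ⟩ := hperm
  have h₁ : n ^ 2 < d ^ 3 := Nat.pow_lt_pow_of_rpow_div_lt three_ne_zero (by exact_mod_cast hd1)
  have h₂ : d ^ 4 ≤ n ^ 3 := Nat.pow_le_pow_of_le_rpow_div four_ne_zero (by exact_mod_cast hd2)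
  obtain ⟨x, hx₁, hx₂, hx₃⟩ := hreg.exists_rayleigh_ge (by simpa using h₁) (by simpa using h₂)
  rw [Fintype.card_fin] at hx₃
  have hle := hA.dotProduct_mulVec_le_of_orthogonal_top_eigenvector hμ hσ (by omega)
    (hA.eigenvalues_le_of_dotProduct_mulVec_le hreg.dotProduct_adjMatrix_mulVec_le)
    (fun h => (one_ne_zero : (1 : ℝ) ≠ 0) (congrFun h ⟨0, by omega⟩))
    hreg.adjMatrix_mulVec_one hx₁
  exact le_of_mul_le_mul_right (hx₃.trans hle) hx₂
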